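/- Let α, β, γ be real constants with β ≠ 0 and γ ≠ 0, let p1 : ℝ → ℝ be smooth and nonvanishing, and set p2 = −(α/β)p1, q1 = −8α p1, q2 = (4/γ)p1, r1 = α/β, r2 = 4α²γ/β. Define D(x,y) = 1 + αx² + βy², ψ(t,x,y) = 1/D(x,y) and w(t,x,y) = ∂/∂y (2αγ y/D(x,y)) = 2αγ(1 + αx² − βy²)/D(x,y)². Then at every point (t,x,y) with D(x,y) ≠ 0 the pair (ψ, w) satisfies the vcDS system: i ψ_t + p1 ψ_xx + p2 ψ_yy = q1|ψ|²ψ + q2 ψ w and w_xx + r1 w_yy = r2(|ψ|²)_yy (a stationary lump-type solution). -/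

import Mathlib

/-!
In each of the variables x and y separately, ψ = 1/D, |ψ|² = 1/D² and
w = 2αγ(1 + αx² − βy²)/D² have the form (a + b s²)/(c + m s²)ⁿ, whose second derivative has a
closed form wherever c + m s² ≠ 0. Since ψ does not depend on t, substituting these closed forms
turns both equations into rational identities in x and y with powers of D as denominators;
p₁ factors out of the first one.
-/

noncomputable section

/-- Partial derivative in the first (time) variable. -/
def dt3 (f : ℝ → ℝ → ℝ → ℂ) : ℝ → ℝ → ℝ → ℂ := fun t x y => deriv (fun s => f s x y) t

/-- Partial derivative in the second (x) variable. -/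
def dx3 (f : ℝ → ℝ → ℝ → ℂ) : ℝ → ℝ → ℝ → ℂ := fun t x y => deriv (fun s => f t s y) x

/-- Partial derivative in the third (y) variable. -/
def dy3 (f : ℝ → ℝ → ℝ → ℂ) : ℝ → ℝ → ℝ → ℂ := fun t x y => deriv (fun s => f t x s) y

/-- Partial derivative in the second (x) variable, real-valued functions. -/
def rx3 (f : ℝ → ℝ → ℝ → ℝ) : ℝ → ℝ → ℝ → ℝ := fun t x y => deriv (fun s => f t s y) x

/-- Partial derivative in the third (y) variable, real-valued functions. -/
def ry3 (f : ℝ → ℝ → ℝ → ℝ) : ℝ → ℝ → ℝ → ℝ := fun t x y => deriv (fun s => f t x s) y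

/-- Smoothness of a complex-valued function of (t,x,y). -/
def Smooth3C (f : ℝ → ℝ → ℝ → ℂ) : Prop :=
  ContDiff ℝ (⊤ : ℕ∞) (fun p : ℝ × ℝ × ℝ => f p.1 p.2.1 p.2.2)

/-- Smoothness of a real-valued function of (t,x,y). -/
def Smooth3R (f : ℝ → ℝ → ℝ → ℝ) : Prop :=
  ContDiff ℝ (⊤ : ℕ∞) (fun p : ℝ × ℝ × ℝ => f p.1 p.2.1 p.2.2)

/-- The Davey–Stewartson system with constants ε₁, ε₂, δ₁, δ₂ holds at the point (t,x,y):
`i ψ_t + ψ_xx + ε₁ ψ_yy = ε₂ |ψ|² ψ + ψ w`, `w_xx + δ₁ w_yy = δ₂ (|ψ|²)_yy`. -/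
def DSAt (ε1 ε2 δ1 δ2 : ℝ) (ψ : ℝ → ℝ → ℝ → ℂ) (w : ℝ → ℝ → ℝ → ℝ)
    (t x y : ℝ) : Prop :=
  Complex.I * dt3 ψ t x y + dx3 (dx3 ψ) t x y + (ε1 : ℂ) * dy3 (dy3 ψ) t x y
      = (ε2 : ℂ) * ‖ψ t x y‖^2 * ψ t x y + ψ t x y * (w t x y : ℂ)
    ∧ rx3 (rx3 w) t x y + δ1 * ry3 (ry3 w) t x y
      = δ2 * ry3 (ry3 (fun t x y => ‖ψ t x y‖^2)) t x y

/-- (ψ, w) is a solution of the Davey–Stewartson system everywhere. -/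
def IsDSSolution (ε1 ε2 δ1 δ2 : ℝ) (ψ : ℝ → ℝ → ℝ → ℂ) (w : ℝ → ℝ → ℝ → ℝ) : Prop :=
  ∀ t x y : ℝ, DSAt ε1 ε2 δ1 δ2 ψ w t x y

/-- The variable coefficient Davey–Stewartson system with coefficient functions
p₁,p₂,q₁,q₂,r₁,r₂ of t holds at the point (t,x,y):
`i ψ_t + p₁ψ_xx + p₂ψ_yy = q₁|ψ|²ψ + q₂ψw`, `w_xx + r₁w_yy = r₂(|ψ|²)_yy`. -/
def vcDSAt (p1 p2 q1 q2 r1 r2 : ℝ → ℝ) (ψ : ℝ → ℝ → ℝ → ℂ) (w : ℝ → ℝ → ℝ → ℝ)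
    (t x y : ℝ) : Prop :=
  Complex.I * dt3 ψ t x y + (p1 t : ℂ) * dx3 (dx3 ψ) t x y
      + (p2 t : ℂ) * dy3 (dy3 ψ) t x y
      = (q1 t : ℂ) * ‖ψ t x y‖^2 * ψ t x y
        + (q2 t : ℂ) * ψ t x y * (w t x y : ℂ)
    ∧ rx3 (rx3 w) t x y + r1 t * ry3 (ry3 w) t x y
      = r2 t * ry3 (ry3 (fun t x y => ‖ψ t x y‖^2)) t x y

/-- (ψ, w) is a solution of the vcDS system everywhere. -/
def IsVcDSSolution (p1 p2 q1 q2 r1 r2 : ℝ → ℝ)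
    (ψ : ℝ → ℝ → ℝ → ℂ) (w : ℝ → ℝ → ℝ → ℝ) : Prop :=
  ∀ t x y : ℝ, vcDSAt p1 p2 q1 q2 r1 r2 ψ w t x y

open Filter Topology

theorem deriv_ofReal_comp (f : ℝ → ℝ) (s : ℝ) :
    deriv (fun u => (f u : ℂ)) s = deriv f s := by
  by_cases hf : DifferentiableAt ℝ f s
  · exact hf.hasDerivAt.ofReal_comp.deriv
  · have hf' : ¬ DifferentiableAt ℝ (fun u => (f u : ℂ)) s := fun h =>
      hf (by simpa [Function.comp_def] using Complex.differentiable_re.differentiableAt.comp s h)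
    rw [deriv_zero_of_not_differentiableAt hf, deriv_zero_of_not_differentiableAt hf',
      Complex.ofReal_zero]

theorem deriv_deriv_ofReal_comp (f : ℝ → ℝ) (s : ℝ) :
    deriv (deriv fun u => (f u : ℂ)) s = deriv (deriv f) s := by
  simp only [funext (deriv_ofReal_comp f), deriv_ofReal_comp]

theorem hasDerivAt_add_mul_sq (c m s : ℝ) :
    HasDerivAt (fun u => c + m * u ^ 2) (2 * m * s) s := by
  simpa [mul_comm, mul_left_comm] using ((hasDerivAt_pow 2 s).const_mul m).const_add c

theorem HasDerivAt.div_add_mul_sq_pow {P : ℝ → ℝ} {P' c m s : ℝ} (n : ℕ)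
    (hP : HasDerivAt P P' s) (hs : c + m * s ^ 2 ≠ 0) :
    HasDerivAt (fun u => P u / (c + m * u ^ 2) ^ n)
      ((P' * (c + m * s ^ 2) - 2 * n * m * s * P s) / (c + m * s ^ 2) ^ (n + 1)) s := by
  refine (hP.div ((hasDerivAt_add_mul_sq c m s).fun_pow n) (pow_ne_zero n hs)).congr_deriv ?_
  rcases n with _ | n
  · simp [hs]
  · simp only [Nat.add_sub_cancel]
    field_simp
    push_cast
    ring

theorem deriv_deriv_even_div_pow {f : ℝ → ℝ} (a b c m : ℝ) (n : ℕ)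
    (hf : ∀ u, f u = (a + b * u ^ 2) / (c + m * u ^ 2) ^ n) {s : ℝ} (hs : c + m * s ^ 2 ≠ 0) :
    deriv (deriv f) s =
      (2 * b * (c + m * s ^ 2) ^ 2 - 2 * n * m * (4 * b * s ^ 2 + (a + b * s ^ 2)) * (c + m * s ^ 2)
        + 4 * n * (n + 1) * m ^ 2 * s ^ 2 * (a + b * s ^ 2)) / (c + m * s ^ 2) ^ (n + 2) := by
  have hD : ∀ᶠ u in 𝓝 s, c + m * u ^ 2 ≠ 0 :=
    (continuous_const.add (continuous_const.mul (continuous_pow 2))).continuousAt.eventually_ne hs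
  have hf' : deriv f =ᶠ[𝓝 s] fun u =>
      (2 * b * u * (c + m * u ^ 2) - 2 * n * m * u * (a + b * u ^ 2)) / (c + m * u ^ 2) ^ (n + 1) :=
    hD.mono fun u hu => by
      rw [funext hf]
      exact ((hasDerivAt_add_mul_sq a b u).div_add_mul_sq_pow n hu).deriv
  have hP := (((hasDerivAt_id' s).const_mul (2 * b)).fun_mul (hasDerivAt_add_mul_sq c m s)).fun_sub
    (((hasDerivAt_id' s).const_mul (2 * n * m)).fun_mul (hasDerivAt_add_mul_sq a b s))
  rw [hf'.deriv_eq]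
  refine ((hP.div_add_mul_sq_pow (n + 1) hs).deriv).trans ?_
  field_simp
  push_cast
  ring

theorem vcds_lump_solution_general
    (α β γ : ℝ) (hβ : β ≠ 0) (hγ : γ ≠ 0)
    (p1 : ℝ → ℝ)
    (p2 q1 q2 r1 r2 : ℝ → ℝ)
    (hp2 : ∀ t : ℝ, p2 t = -(α/β) * p1 t)
    (hq1 : ∀ t : ℝ, q1 t = -8 * α * p1 t)
    (hq2 : ∀ t : ℝ, q2 t = (4/γ) * p1 t)
    (hr1 : ∀ t : ℝ, r1 t = α/β)
    (hr2 : ∀ t : ℝ, r2 t = 4 * α^2 * γ / β)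
    (ψ : ℝ → ℝ → ℝ → ℂ) (w : ℝ → ℝ → ℝ → ℝ)
    (hψ : ∀ t x y : ℝ, ψ t x y = ((1 / (1 + α * x^2 + β * y^2) : ℝ) : ℂ))
    (hw : ∀ t x y : ℝ, w t x y =
      2 * α * γ * (1 + α * x^2 - β * y^2) / (1 + α * x^2 + β * y^2)^2) :
    ∀ t x y : ℝ, 1 + α * x^2 + β * y^2 ≠ 0 →
      (deriv (fun s => 2 * α * γ * s / (1 + α * x^2 + β * s^2)) y = w t x y)
      ∧ vcDSAt p1 p2 q1 q2 r1 r2 ψ w t x y := by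
  intro t x y hD
  have hD' : 1 + β * y ^ 2 + α * x ^ 2 ≠ 0 := by rwa [add_right_comm]
  have hψ_sq : ∀ u, ‖ψ t x u‖ ^ 2 = 1 / (1 + α * x ^ 2 + β * u ^ 2) ^ 2 := fun u => by
    rw [hψ, Complex.norm_real, Real.norm_eq_abs, sq_abs, div_pow, one_pow]
  have ψ_t : dt3 ψ t x y = 0 := by simp only [dt3, hψ, deriv_const]
  have ψ_xx := deriv_deriv_even_div_pow (f := fun u => 1 / (1 + α * u ^ 2 + β * y ^ 2))
    1 0 (1 + β * y ^ 2) α 1 (fun u => by ring) hD'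
  have ψ_yy := deriv_deriv_even_div_pow (f := fun u => 1 / (1 + α * x ^ 2 + β * u ^ 2))
    1 0 (1 + α * x ^ 2) β 1 (fun u => by ring) hD
  have ψ_sq_yy := deriv_deriv_even_div_pow (f := fun u => ‖ψ t x u‖ ^ 2)
    1 0 (1 + α * x ^ 2) β 2 (fun u => by rw [hψ_sq]; ring) hD
  have w_xx := deriv_deriv_even_div_pow (f := fun u => w t u y)
    (2 * α * γ * (1 - β * y ^ 2)) (2 * α ^ 2 * γ) (1 + β * y ^ 2) α 2 (fun u => by rw [hw]; ring) hD'
  have w_yy := deriv_deriv_even_div_pow (f := fun u => w t x u)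
    (2 * α * γ * (1 + α * x ^ 2)) (-2 * α * β * γ) (1 + α * x ^ 2) β 2 (fun u => by rw [hw]; ring) hD
  refine ⟨?_, ?_, ?_⟩
  · rw [(((hasDerivAt_id' y).const_mul (2 * α * γ)).fun_div (hasDerivAt_add_mul_sq _ β y) hD).deriv, hw]
    field_simp
    ring
  · simp only [dx3, dy3, hψ, deriv_deriv_ofReal_comp]
    rw [ψ_t, ψ_xx, ψ_yy, hp2, hq1, hq2, hw, Complex.norm_real, Real.norm_eq_abs, mul_zero,
      zero_add]
    simp only [← Complex.ofReal_pow, ← Complex.ofReal_mul, ← Complex.ofReal_add, Complex.ofReal_inj,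
      sq_abs]
    field_simp
    ring
  · simp only [rx3, ry3]
    rw [w_xx, w_yy, ψ_sq_yy, hr1, hr2]
    field_simp
    ring

/-- the stationary lump-type solution of the vcDS system. -/
theorem vcds_lump_solution
    (α β γ : ℝ) (hβ : β ≠ 0) (hγ : γ ≠ 0)
    (p1 : ℝ → ℝ) (hp1 : ContDiff ℝ (⊤ : ℕ∞) p1) (hp1ne : ∀ t : ℝ, p1 t ≠ 0)
    (p2 q1 q2 r1 r2 : ℝ → ℝ)
    (hp2 : ∀ t : ℝ, p2 t = -(α/β) * p1 t)
    (hq1 : ∀ t : ℝ, q1 t = -8 * α * p1 t)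
    (hq2 : ∀ t : ℝ, q2 t = (4/γ) * p1 t)
    (hr1 : ∀ t : ℝ, r1 t = α/β)
    (hr2 : ∀ t : ℝ, r2 t = 4 * α^2 * γ / β)
    (ψ : ℝ → ℝ → ℝ → ℂ) (w : ℝ → ℝ → ℝ → ℝ)
    (hψ : ∀ t x y : ℝ, ψ t x y = ((1 / (1 + α * x^2 + β * y^2) : ℝ) : ℂ))
    (hw : ∀ t x y : ℝ, w t x y =
      2 * α * γ * (1 + α * x^2 - β * y^2) / (1 + α * x^2 + β * y^2)^2) :
    ∀ t x y : ℝ, 1 + α * x^2 + β * y^2 ≠ 0 →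
      (deriv (fun s => 2 * α * γ * s / (1 + α * x^2 + β * s^2)) y = w t x y)
      ∧ vcDSAt p1 p2 q1 q2 r1 r2 ψ w t x y :=
  vcds_lump_solution_general α β γ hβ hγ p1 p2 q1 q2 r1 r2 hp2 hq1 hq2 hr1 hr2 ψ w hψ hw
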